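/- Let Z₁,…,Zₙ be i.i.d. Lap(b) random variables with sum Z, and let γ ∈ (2/eⁿ, 1). Then with probability at least 1 − γ, |Z| < 2√2·b·√n·log(2/γ). -/

import Mathlib

/-! The moment generating function of `Lap(b)` is `(1 - s²b²)⁻¹` for `|s| < 1/b`, so by
independence the sum `Z` of `n` copies has mgf `(1 - s²b²)⁻ⁿ`. At `s = 1/(b√(2n))` this is
`(1 - 1/(2n))⁻ⁿ ≤ 2` by Bernoulli's inequality, and Chernoff bounds on both tails give
`P(|Z| ≥ ε) ≤ 4 exp(-ε/(b√(2n)))`. For `ε = 2√2·b·√n·log(2/γ)` the right-hand side is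
`4 (γ/2)² = γ² ≤ γ`. -/

open MeasureTheory ProbabilityTheory

/-- The Laplace distribution with scale `b`: the measure on `ℝ` with density
`x ↦ (1/(2b)) · exp(-|x|/b)` with respect to Lebesgue measure. -/
noncomputable def lap (b : ℝ) : Measure ℝ :=
  volume.withDensity (fun x => ENNReal.ofReal ((1 / (2 * b)) * Real.exp (-|x| / b)))

open Real Set

section TwoSidedExponential

variable {a s : ℝ}

lemma exp_mul_sub_mul_abs_eqOn_Iic :
    EqOn (fun x => exp (s * x - a * |x|)) (fun x => exp ((s + a) * x)) (Iic 0) := by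
  intro x hx
  simp only [abs_of_nonpos (show x ≤ 0 from hx)]
  ring_nf

lemma exp_mul_sub_mul_abs_eqOn_Ioi :
    EqOn (fun x => exp (s * x - a * |x|)) (fun x => exp ((s - a) * x)) (Ioi 0) := by
  intro x hx
  simp only [abs_of_pos (show 0 < x from hx)]
  ring_nf

lemma integrableOn_exp_mul_sub_mul_abs_Iic (hs : |s| < a) :
    IntegrableOn (fun x => exp (s * x - a * |x|)) (Iic 0) :=
  (integrableOn_exp_mul_Iic (by linarith [neg_abs_le s]) 0).congr_fun
    exp_mul_sub_mul_abs_eqOn_Iic.symm measurableSet_Iic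

lemma integrableOn_exp_mul_sub_mul_abs_Ioi (hs : |s| < a) :
    IntegrableOn (fun x => exp (s * x - a * |x|)) (Ioi 0) :=
  (integrableOn_exp_mul_Ioi (by linarith [le_abs_self s]) 0).congr_fun
    exp_mul_sub_mul_abs_eqOn_Ioi.symm measurableSet_Ioi

lemma integrable_exp_mul_sub_mul_abs (hs : |s| < a) :
    Integrable (fun x => exp (s * x - a * |x|)) := by
  simpa [Iic_union_Ioi] using (integrableOn_exp_mul_sub_mul_abs_Iic hs).union
    (integrableOn_exp_mul_sub_mul_abs_Ioi hs)

lemma integral_exp_mul_sub_mul_abs (hs : |s| < a) :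
    ∫ x, exp (s * x - a * |x|) = 2 * a / (a ^ 2 - s ^ 2) := by
  have hpos : 0 < s + a := by linarith [neg_abs_le s]
  have hneg : s - a < 0 := by linarith [le_abs_self s]
  rw [← intervalIntegral.integral_Iic_add_Ioi (integrableOn_exp_mul_sub_mul_abs_Iic hs)
    (integrableOn_exp_mul_sub_mul_abs_Ioi hs),
    setIntegral_congr_fun measurableSet_Iic exp_mul_sub_mul_abs_eqOn_Iic,
    setIntegral_congr_fun measurableSet_Ioi exp_mul_sub_mul_abs_eqOn_Ioi,
    integral_exp_mul_Iic hpos, integral_exp_mul_Ioi hneg]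
  simp only [mul_zero, exp_zero]
  have hsq : a ^ 2 - s ^ 2 ≠ 0 := by nlinarith
  field_simp [hpos.ne', hneg.ne]
  ring

end TwoSidedExponential

lemma half_le_one_sub_inv_two_mul_pow (n : ℕ) : 1 / 2 ≤ (1 - (2 * n : ℝ)⁻¹) ^ n := by
  rcases Nat.eq_zero_or_pos n with rfl | hn
  · norm_num
  have hn' : (1 : ℝ) ≤ n := by exact_mod_cast hn
  have hinv : (2 * n : ℝ)⁻¹ ≤ 2 := by
    rw [inv_le_comm₀ (by positivity) two_pos]
    linarith
  calc (1 : ℝ) / 2 = 1 + n * -(2 * n : ℝ)⁻¹ := by field_simp; ring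
    _ ≤ (1 + -(2 * n : ℝ)⁻¹) ^ n := one_add_mul_le_pow (by linarith) n
    _ = (1 - (2 * n : ℝ)⁻¹) ^ n := by rw [← sub_eq_add_neg]

section Laplace

variable {b : ℝ}

lemma measurable_lap_density (b : ℝ) :
    Measurable fun x : ℝ => ENNReal.ofReal (1 / (2 * b) * exp (-|x| / b)) := by
  fun_prop

lemma lap_density_mul_exp_mul (b s x : ℝ) :
    1 / (2 * b) * exp (-|x| / b) * exp (s * x) = (2 * b)⁻¹ * exp (s * x - b⁻¹ * |x|) := by
  rw [mul_assoc, ← exp_add]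
  ring_nf

lemma integral_lap (hb : 0 < b) (g : ℝ → ℝ) :
    ∫ x, g x ∂lap b = ∫ x, 1 / (2 * b) * exp (-|x| / b) * g x := by
  rw [lap, integral_withDensity_eq_integral_toReal_smul (measurable_lap_density b)
    (.of_forall fun _ => ENNReal.ofReal_lt_top)]
  congr 1 with x
  rw [ENNReal.toReal_ofReal (by positivity), smul_eq_mul]

lemma integrable_lap_iff (hb : 0 < b) {g : ℝ → ℝ} :
    Integrable g (lap b) ↔ Integrable fun x => 1 / (2 * b) * exp (-|x| / b) * g x := by
  rw [lap, integrable_withDensity_iff (measurable_lap_density b)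
    (.of_forall fun _ => ENNReal.ofReal_lt_top)]
  refine integrable_congr (.of_forall fun x => ?_)
  simp only
  rw [ENNReal.toReal_ofReal (by positivity), mul_comm]

lemma integrable_exp_mul_lap (hb : 0 < b) {s : ℝ} (hs : |s| < b⁻¹) :
    Integrable (fun x => exp (s * x)) (lap b) := by
  rw [integrable_lap_iff hb]
  simpa only [lap_density_mul_exp_mul] using (integrable_exp_mul_sub_mul_abs hs).const_mul _

lemma mgf_id_lap (hb : 0 < b) {s : ℝ} (hs : |s| < b⁻¹) :
    mgf id (lap b) s = (1 - s ^ 2 * b ^ 2)⁻¹ := by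
  rw [mgf, integral_lap hb]
  simp only [id, lap_density_mul_exp_mul]
  rw [integral_const_mul, integral_exp_mul_sub_mul_abs hs]
  have hsb : (|s| * b) ^ 2 < 1 :=
    pow_lt_one₀ (by positivity) (by rwa [← lt_div_iff₀ hb, one_div]) two_ne_zero
  rw [mul_pow, sq_abs] at hsb
  have : 1 - s ^ 2 * b ^ 2 ≠ 0 := by linarith
  field_simp

end Laplace

namespace ProbabilityTheory

variable {Ω ι : Type*} [MeasurableSpace Ω] {μ : Measure Ω} {b s : ℝ}

lemma ofReal_one_sub_le_of_measureReal_compl_le [IsProbabilityMeasure μ] {A : Set Ω} {γ : ℝ}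
    (h : μ.real Aᶜ ≤ γ) : ENNReal.ofReal (1 - γ) ≤ μ A := by
  have hcover : 1 ≤ μ.real A + μ.real Aᶜ := by
    simpa [union_compl_self] using measureReal_union_le (μ := μ) A Aᶜ
  exact ENNReal.ofReal_le_of_le_toReal (by rw [← measureReal_def]; linarith)

lemma measureReal_le_abs_le_exp_mul_mgf [IsFiniteMeasure μ] {X : Ω → ℝ} {t : ℝ} (ε : ℝ)
    (ht : 0 ≤ t) (h_int_pos : Integrable (fun ω => exp (t * X ω)) μ)
    (h_int_neg : Integrable (fun ω => exp (-t * X ω)) μ) :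
    μ.real {ω | ε ≤ |X ω|} ≤ exp (-t * ε) * (mgf X μ t + mgf X μ (-t)) := by
  have hsplit : {ω | ε ≤ |X ω|} ⊆ {ω | ε ≤ X ω} ∪ {ω | X ω ≤ -ε} := fun ω (hω : ε ≤ |X ω|) =>
    (le_abs'.mp hω).symm
  calc μ.real {ω | ε ≤ |X ω|}
      ≤ μ.real {ω | ε ≤ X ω} + μ.real {ω | X ω ≤ -ε} :=
        (measureReal_mono hsplit).trans (measureReal_union_le _ _)
    _ ≤ exp (-t * ε) * mgf X μ t + exp (-(-t) * -ε) * mgf X μ (-t) :=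
        add_le_add (measure_ge_le_exp_mul_mgf ε ht h_int_pos)
          (measure_le_le_exp_mul_mgf (-ε) (neg_nonpos.mpr ht) h_int_neg)
    _ = exp (-t * ε) * (mgf X μ t + mgf X μ (-t)) := by ring_nf

lemma integrable_exp_mul_of_map_eq_lap {X : Ω → ℝ} (hX : Measurable X)
    (hlaw : μ.map X = lap b) (hb : 0 < b) (hs : |s| < b⁻¹) :
    Integrable (fun ω => exp (s * X ω)) μ :=
  (integrable_map_measure (g := fun x => exp (s * x)) (by fun_prop) hX.aemeasurable).mp
    (hlaw ▸ integrable_exp_mul_lap hb hs)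

lemma mgf_of_map_eq_lap {X : Ω → ℝ} (hX : AEMeasurable X μ) (hlaw : μ.map X = lap b)
    (hb : 0 < b) (hs : |s| < b⁻¹) : mgf X μ s = (1 - s ^ 2 * b ^ 2)⁻¹ := by
  rw [← mgf_id_map hX, hlaw, mgf_id_lap hb hs]

variable [Fintype ι] {Z : ι → Ω → ℝ}

lemma iIndepFun.mgf_sum_of_map_eq_lap (hindep : iIndepFun Z μ) (hmeas : ∀ i, Measurable (Z i))
    (hlaw : ∀ i, μ.map (Z i) = lap b) (hb : 0 < b) (hs : |s| < b⁻¹) :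
    mgf (∑ i, Z i) μ s = (1 - s ^ 2 * b ^ 2)⁻¹ ^ Fintype.card ι := by
  rw [hindep.mgf_sum hmeas, Finset.prod_congr rfl fun i _ =>
    mgf_of_map_eq_lap (hmeas i).aemeasurable (hlaw i) hb hs, Finset.prod_const,
    Finset.card_univ]

lemma iIndepFun.integrable_exp_mul_sum_of_map_eq_lap [IsFiniteMeasure μ]
    (hindep : iIndepFun Z μ) (hmeas : ∀ i, Measurable (Z i))
    (hlaw : ∀ i, μ.map (Z i) = lap b) (hb : 0 < b) (hs : |s| < b⁻¹) :
    Integrable (fun ω => exp (s * (∑ i, Z i) ω)) μ :=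
  hindep.integrable_exp_mul_sum hmeas fun i _ =>
    integrable_exp_mul_of_map_eq_lap (hmeas i) (hlaw i) hb hs

theorem iIndepFun.measureReal_le_abs_sum_le_of_map_eq_lap [IsFiniteMeasure μ]
    (hindep : iIndepFun Z μ) (hmeas : ∀ i, Measurable (Z i))
    (hlaw : ∀ i, μ.map (Z i) = lap b) (hb : 0 < b) {t : ℝ} (ht : 0 ≤ t) (htb : t < b⁻¹)
    (ε : ℝ) :
    μ.real {ω | ε ≤ |∑ i, Z i ω|} ≤
      2 * exp (-t * ε) * (1 - t ^ 2 * b ^ 2)⁻¹ ^ Fintype.card ι := by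
  have hpos : |t| < b⁻¹ := by rwa [abs_of_nonneg ht]
  have hneg : |-t| < b⁻¹ := by rwa [abs_neg]
  have h := measureReal_le_abs_le_exp_mul_mgf ε ht
    (hindep.integrable_exp_mul_sum_of_map_eq_lap hmeas hlaw hb hpos)
    (hindep.integrable_exp_mul_sum_of_map_eq_lap hmeas hlaw hb hneg)
  rw [hindep.mgf_sum_of_map_eq_lap hmeas hlaw hb hpos,
    hindep.mgf_sum_of_map_eq_lap hmeas hlaw hb hneg, neg_sq] at h
  simpa only [Finset.sum_apply, two_mul, mul_add, add_mul] using h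

theorem iIndepFun.measureReal_le_abs_sum_le_four_mul_exp [IsFiniteMeasure μ] [Nonempty ι]
    (hindep : iIndepFun Z μ) (hmeas : ∀ i, Measurable (Z i))
    (hlaw : ∀ i, μ.map (Z i) = lap b) (hb : 0 < b) (ε : ℝ) :
    μ.real {ω | ε ≤ |∑ i, Z i ω|} ≤ 4 * exp (-ε / (b * √(2 * Fintype.card ι))) := by
  set n := Fintype.card ι
  have hn : (1 : ℝ) ≤ n := by exact_mod_cast Fintype.card_pos
  have hsqrt : 1 < √(2 * n) := by rw [Real.lt_sqrt zero_le_one]; linarith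
  have ht : 0 ≤ (b * √(2 * n))⁻¹ := by positivity
  have htb : (b * √(2 * n))⁻¹ < b⁻¹ := by
    rw [mul_inv]
    exact mul_lt_of_lt_one_right (inv_pos.mpr hb) (inv_lt_one_of_one_lt₀ hsqrt)
  have ht_sq : (b * √(2 * n))⁻¹ ^ 2 * b ^ 2 = (2 * n : ℝ)⁻¹ := by
    rw [inv_pow, mul_pow, Real.sq_sqrt (by positivity)]
    field_simp
  have hmgf_le : (1 - (2 * n : ℝ)⁻¹)⁻¹ ^ n ≤ 2 := by
    rw [inv_pow, inv_le_comm₀ (by linarith [half_le_one_sub_inv_two_mul_pow n]) two_pos]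
    linarith [half_le_one_sub_inv_two_mul_pow n]
  calc μ.real {ω | ε ≤ |∑ i, Z i ω|}
      ≤ 2 * exp (-(b * √(2 * n))⁻¹ * ε) * (1 - (2 * n : ℝ)⁻¹)⁻¹ ^ n := by
        rw [← ht_sq]
        exact hindep.measureReal_le_abs_sum_le_of_map_eq_lap hmeas hlaw hb ht htb ε
    _ ≤ 2 * exp (-(b * √(2 * n))⁻¹ * ε) * 2 := by gcongr
    _ = 4 * exp (-ε / (b * √(2 * n))) := by ring_nf

end ProbabilityTheory

/-- **High-probability bound for sums of i.i.d. Laplace random variables.** If `Z₁, …, Zₙ`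
are i.i.d. `Lap(b)` random variables with sum `Z` and `γ ∈ (2/eⁿ, 1)`, then with
probability at least `1 - γ`, `|Z| < 2√2·b·√n·log(2/γ)`. -/
theorem laplace_sum_high_probability {Ω : Type*} [MeasurableSpace Ω]
    (μ : Measure Ω) [IsProbabilityMeasure μ] (n : ℕ) (b : ℝ) (hb : 0 < b)
    (Z : Fin n → Ω → ℝ) (hmeas : ∀ i, Measurable (Z i))
    (hindep : iIndepFun Z μ)
    (hlaw : ∀ i, μ.map (Z i) = lap b)
    (γ : ℝ) (hγ0 : 2 / Real.exp n < γ) (hγ1 : γ < 1) :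
    ENNReal.ofReal (1 - γ) ≤
      μ {ω | |∑ i, Z i ω| < 2 * Real.sqrt 2 * b * Real.sqrt n * Real.log (2 / γ)} := by
  have hγ : 0 < γ := lt_trans (by positivity) hγ0
  have hn : 0 < n := Nat.pos_of_ne_zero fun h => by subst h; norm_num at hγ0; linarith
  have : Nonempty (Fin n) := ⟨⟨0, hn⟩⟩
  set L := Real.log (2 / γ)
  have hexp : exp (-(2 * √2 * b * √n * L) / (b * √(2 * n))) = (γ / 2) ^ 2 := by
    rw [Real.sqrt_mul zero_le_two, show -(2 * √2 * b * √n * L) / (b * (√2 * √n)) = -L + -L by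
      field_simp; ring, exp_add, exp_neg, exp_log (by positivity), inv_div, sq]
  apply ofReal_one_sub_le_of_measureReal_compl_le
  simp only [compl_ofPred, not_lt]
  calc _ ≤ 4 * exp (-(2 * √2 * b * √n * L) / (b * √(2 * n))) := by
        simpa using hindep.measureReal_le_abs_sum_le_four_mul_exp hmeas hlaw hb _
    _ = γ ^ 2 := by rw [hexp]; ring
    _ ≤ γ := by nlinarith
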